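/- Let K be a suitable convolution kernel on ℝ^d, let E₀ ⊆ Ω ⊆ ℝ^d be measurable with P_K(E₀) < ∞ and with Ω sufficiently large, i.e. Ω ⊇ T_K E₀ ∪ E₀. Set E₁ := T_K E₀. Then |E₁ \ E₀| = 0 (Lebesgue measure) if and only if for every measurable F ⊆ Ω \ E₀ one has P_K(E₀ ∪ F) + S_K(F) ≥ P_K(E₀). -/
import Mathlib


open MeasureTheory
open scoped ENNReal

/-- The convolution of a kernel `K` with the indicator function of a set `E`. -/
noncomputable def conv {d : ℕ} (K : EuclideanSpace ℝ (Fin d) → ℝ)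
    (E : Set (EuclideanSpace ℝ (Fin d))) (x : EuclideanSpace ℝ (Fin d)) : ℝ :=
  ∫ y, K (x - y) * E.indicator (fun _ => (1 : ℝ)) y

/-- The thresholding operator `T_K E = {x | (K ∗ χ_E)(x) > 1/2}`. -/
def thresh {d : ℕ} (K : EuclideanSpace ℝ (Fin d) → ℝ)
    (E : Set (EuclideanSpace ℝ (Fin d))) : Set (EuclideanSpace ℝ (Fin d)) :=
  {x | 1 / 2 < conv K E x}

/-- The `K`-perimeter `P_K(D) = ∫_{Dᶜ} K ∗ χ_D`, as a value in `[0,∞]`. -/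
noncomputable def PK {d : ℕ} (K : EuclideanSpace ℝ (Fin d) → ℝ)
    (D : Set (EuclideanSpace ℝ (Fin d))) : ℝ≥0∞ :=
  ∫⁻ x in Dᶜ, ENNReal.ofReal (conv K D x)

/-- The self-interaction `S_K(D) = ∫_D K ∗ χ_D`, as a value in `[0,∞]`. -/
noncomputable def SK {d : ℕ} (K : EuclideanSpace ℝ (Fin d) → ℝ)
    (D : Set (EuclideanSpace ℝ (Fin d))) : ℝ≥0∞ :=
  ∫⁻ x in D, ENNReal.ofReal (conv K D x)

section Aux

variable {d : ℕ}

private lemma indicator_mul_aux {B : Set (EuclideanSpace ℝ (Fin d))}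
    (f : EuclideanSpace ℝ (Fin d) → ℝ≥0∞) (y : EuclideanSpace ℝ (Fin d)) :
    B.indicator f y = B.indicator (fun _ => (1 : ℝ≥0∞)) y * f y := by
  by_cases hy : y ∈ B <;> simp [Set.indicator_apply, hy]

private lemma repr_aux {B : Set (EuclideanSpace ℝ (Fin d))} (hB : MeasurableSet B)
    (g : EuclideanSpace ℝ (Fin d) → ℝ≥0∞) :
    ∫⁻ y in B, g y = ∫⁻ y, B.indicator (fun _ => (1 : ℝ≥0∞)) y * g y := by
  rw [← lintegral_indicator hB]
  exact lintegral_congr fun y => indicator_mul_aux g y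

private lemma ind_ne_top {B : Set (EuclideanSpace ℝ (Fin d))} (x : EuclideanSpace ℝ (Fin d)) :
    B.indicator (fun _ => (1 : ℝ≥0∞)) x ≠ ⊤ := by
  by_cases hx : x ∈ B <;> simp [Set.indicator_apply, hx]

private lemma measK_inner {K' : EuclideanSpace ℝ (Fin d) → ℝ} (hK'm : Measurable K')
    {B : Set (EuclideanSpace ℝ (Fin d))} (hB : MeasurableSet B) :
    Measurable fun x => ∫⁻ y in B, ENNReal.ofReal (K' (x - y)) := by
  have h : ∀ x, (∫⁻ y in B, ENNReal.ofReal (K' (x - y)))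
      = ∫⁻ y, B.indicator (fun _ => (1 : ℝ≥0∞)) y * ENNReal.ofReal (K' (x - y)) :=
    fun x => repr_aux hB _
  simp_rw [h]
  exact Measurable.lintegral_prod_right <|
    (((measurable_const.indicator hB).comp measurable_snd).mul
      (ENNReal.measurable_ofReal.comp (hK'm.comp (measurable_fst.sub measurable_snd))))

private lemma JJ_symm {K' : EuclideanSpace ℝ (Fin d) → ℝ} (hK'm : Measurable K')
    (hK'e : ∀ᵐ z : EuclideanSpace ℝ (Fin d), K' (-z) = K' z)
    {A B : Set (EuclideanSpace ℝ (Fin d))} (hA : MeasurableSet A) (hB : MeasurableSet B) :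
    ∫⁻ x in A, ∫⁻ y in B, ENNReal.ofReal (K' (x - y))
      = ∫⁻ x in B, ∫⁻ y in A, ENNReal.ofReal (K' (x - y)) := by
  have hf : Measurable (Function.uncurry fun x y : EuclideanSpace ℝ (Fin d) =>
      A.indicator (fun _ => (1 : ℝ≥0∞)) x *
        (B.indicator (fun _ => (1 : ℝ≥0∞)) y * ENNReal.ofReal (K' (x - y)))) := by
    apply Measurable.mul
    · exact (measurable_const.indicator hA).comp measurable_fst
    · exact ((measurable_const.indicator hB).comp measurable_snd).mul
        (ENNReal.measurable_ofReal.comp (hK'm.comp (measurable_fst.sub measurable_snd)))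
  calc
    ∫⁻ x in A, ∫⁻ y in B, ENNReal.ofReal (K' (x - y))
        = ∫⁻ x, A.indicator (fun _ => (1 : ℝ≥0∞)) x *
            ∫⁻ y, B.indicator (fun _ => (1 : ℝ≥0∞)) y * ENNReal.ofReal (K' (x - y)) := by
          rw [repr_aux hA]
          exact lintegral_congr fun x => by rw [repr_aux hB]
    _ = ∫⁻ x, ∫⁻ y, A.indicator (fun _ => (1 : ℝ≥0∞)) x *
            (B.indicator (fun _ => (1 : ℝ≥0∞)) y * ENNReal.ofReal (K' (x - y))) :=
        lintegral_congr fun x => (lintegral_const_mul' _ _ (ind_ne_top x)).symm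
    _ = ∫⁻ y, ∫⁻ x, A.indicator (fun _ => (1 : ℝ≥0∞)) x *
            (B.indicator (fun _ => (1 : ℝ≥0∞)) y * ENNReal.ofReal (K' (x - y))) :=
        lintegral_lintegral_swap hf.aemeasurable
    _ = ∫⁻ y, B.indicator (fun _ => (1 : ℝ≥0∞)) y *
            ∫⁻ x, A.indicator (fun _ => (1 : ℝ≥0∞)) x * ENNReal.ofReal (K' (x - y)) := by
        refine lintegral_congr fun y => ?_
        rw [← lintegral_const_mul' _ _ (ind_ne_top y)]
        exact lintegral_congr fun x => by ring
    _ = ∫⁻ y in B, ∫⁻ x in A, ENNReal.ofReal (K' (x - y)) := by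
        rw [← repr_aux hB]
        exact lintegral_congr fun y => by rw [← repr_aux hA]
    _ = ∫⁻ y in B, ∫⁻ x in A, ENNReal.ofReal (K' (y - x)) := by
        refine lintegral_congr fun y => ?_
        have mp : MeasurePreserving (fun x : EuclideanSpace ℝ (Fin d) => x - y)
            volume volume := measurePreserving_sub_right volume y
        have hxy : (fun x : EuclideanSpace ℝ (Fin d) => K' (-(x - y)))
            =ᵐ[volume] fun x => K' (x - y) :=
          mp.quasiMeasurePreserving.ae_eq hK'e
        have hxy' : (fun x : EuclideanSpace ℝ (Fin d) => K' (x - y))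
            =ᵐ[volume] fun x => K' (y - x) := by
          refine hxy.symm.trans (Filter.EventuallyEq.of_eq ?_)
          funext x; rw [neg_sub]
        exact lintegral_congr_ae (ae_restrict_of_ae (hxy'.mono fun x hx => congrArg ENNReal.ofReal hx))

private lemma total_mass {K' : EuclideanSpace ℝ (Fin d) → ℝ} (hint : Integrable K')
    (h0 : 0 ≤ᵐ[volume] K') (h1 : ∫ z, K' z = 1) (x : EuclideanSpace ℝ (Fin d)) :
    ∫⁻ y, ENNReal.ofReal (K' (x - y)) = 1 := by
  have hi : Integrable (fun y => K' (x - y)) volume := hint.comp_sub_left x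
  have hnn : 0 ≤ᵐ[volume] fun y => K' (x - y) :=
    (Measure.measurePreserving_sub_left volume x).quasiMeasurePreserving.ae h0
  rw [← ofReal_integral_eq_lintegral_ofReal hi hnn,
    integral_sub_left_eq_self K' volume x, h1, ENNReal.ofReal_one]

private lemma conv_ofReal {K K' : EuclideanSpace ℝ (Fin d) → ℝ} (hK0 : ∀ x, 0 ≤ K x)
    (hKint : Integrable K) (hKK' : K =ᵐ[volume] K')
    {E : Set (EuclideanSpace ℝ (Fin d))} (hE : MeasurableSet E) (x : EuclideanSpace ℝ (Fin d)) :
    ENNReal.ofReal (conv K E x) = ∫⁻ y in E, ENNReal.ofReal (K' (x - y)) := by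
  have hg : Integrable (fun y => K (x - y)) volume := hKint.comp_sub_left x
  have hfm : AEStronglyMeasurable
      (fun y => K (x - y) * E.indicator (fun _ => (1 : ℝ)) y) volume :=
    hg.aestronglyMeasurable.mul (measurable_const.indicator hE).aestronglyMeasurable
  have hfi : Integrable (fun y => K (x - y) * E.indicator (fun _ => (1 : ℝ)) y) volume := by
    refine Integrable.mono' hg hfm (Filter.Eventually.of_forall fun y => ?_)
    rw [Real.norm_eq_abs, abs_mul, abs_of_nonneg (hK0 _)]
    by_cases hy : y ∈ E <;>
      simp [Set.indicator_apply, hy, hK0 (x - y)]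
  have hnn : 0 ≤ᵐ[volume] fun y => K (x - y) * E.indicator (fun _ => (1 : ℝ)) y :=
    Filter.Eventually.of_forall fun y =>
      mul_nonneg (hK0 _) (Set.indicator_nonneg (fun _ _ => zero_le_one) y)
  rw [conv, ofReal_integral_eq_lintegral_ofReal hfi hnn, ← lintegral_indicator hE]
  have hae : (fun y => K (x - y)) =ᵐ[volume] fun y => K' (x - y) :=
    (Measure.measurePreserving_sub_left volume x).quasiMeasurePreserving.ae_eq hKK'
  refine lintegral_congr_ae (hae.mono fun y hy => ?_)
  by_cases hyE : y ∈ E <;> simp [Set.indicator_apply, hyE, hy]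

end Aux

/-- Contraction under thresholding is equivalent to an almost outward minimizing condition:
    `|T_K E₀ \ E₀| = 0` iff `P_K(E₀ ∪ F) + S_K(F) ≥ P_K(E₀)` for all measurable
    `F ⊆ Ω \ E₀`. -/
theorem contracts_iff_locally_outward_minimizing
    {d : ℕ} (K : EuclideanSpace ℝ (Fin d) → ℝ)
    (hK0 : ∀ x, 0 ≤ K x) (hKeven : ∀ x, K (-x) = K x)
    (hKint : Integrable K) (hK1 : ∫ x, K x = 1)
    (E₀ Ω : Set (EuclideanSpace ℝ (Fin d)))
    (hE₀ : MeasurableSet E₀) (hE₀Ω : E₀ ⊆ Ω) (hPE₀ : PK K E₀ < ⊤)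
    (hbig : thresh K E₀ ∪ E₀ ⊆ Ω) :
    volume (thresh K E₀ \ E₀) = 0 ↔
    (∀ F : Set (EuclideanSpace ℝ (Fin d)), MeasurableSet F → F ⊆ Ω \ E₀ →
        PK K E₀ ≤ PK K (E₀ ∪ F) + SK K F) := by
  classical
  set K' : EuclideanSpace ℝ (Fin d) → ℝ := hKint.aestronglyMeasurable.mk K with hK'def
  have hK'm : Measurable K' := hKint.aestronglyMeasurable.stronglyMeasurable_mk.measurable
  have hKK' : K =ᵐ[volume] K' := hKint.aestronglyMeasurable.ae_eq_mk
  have hK'0 : 0 ≤ᵐ[volume] K' := hKK'.mono fun z hz => hz ▸ hK0 z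
  have hK'int : Integrable K' := hKint.congr hKK'
  have hK'1 : ∫ z, K' z = 1 := by rw [← integral_congr_ae hKK']; exact hK1
  have hK'e : ∀ᵐ z : EuclideanSpace ℝ (Fin d), K' (-z) = K' z := by
    have h1 : (fun z : EuclideanSpace ℝ (Fin d) => K' (-z))
        =ᵐ[volume] fun z => K (-z) :=
      (Measure.measurePreserving_neg volume).quasiMeasurePreserving.ae_eq hKK'.symm
    have h2 : (fun z : EuclideanSpace ℝ (Fin d) => K (-z)) =ᵐ[volume] K' := by
      have he : (fun z : EuclideanSpace ℝ (Fin d) => K (-z)) = K := funext hKeven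
      rw [he]; exact hKK'
    exact h1.trans h2
  set u : EuclideanSpace ℝ (Fin d) → ℝ≥0∞ :=
    fun x => ∫⁻ y in E₀, ENNReal.ofReal (K' (x - y)) with hudef
  have hu_m : Measurable u := measK_inner hK'm hE₀
  have hconvE₀ : ∀ x, ENNReal.ofReal (conv K E₀ x) = u x :=
    fun x => conv_ofReal hK0 hKint hKK' hE₀ x
  have hu_le_one : ∀ x, u x ≤ 1 := fun x => by
    rw [← total_mass hK'int hK'0 hK'1 x]
    exact setLIntegral_le_lintegral _ _
  have huc : ∀ x, (∫⁻ y in E₀ᶜ, ENNReal.ofReal (K' (x - y))) = 1 - u x := by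
    intro x
    have h := lintegral_add_compl (μ := volume)
      (fun y => ENNReal.ofReal (K' (x - y))) hE₀
    rw [total_mass hK'int hK'0 hK'1 x] at h
    exact ENNReal.eq_sub_of_add_eq ((hu_le_one x).trans_lt (by norm_num)).ne
      (by rw [add_comm]; exact h)
  have hPK : ∀ D : Set (EuclideanSpace ℝ (Fin d)), MeasurableSet D →
      PK K D = ∫⁻ x in Dᶜ, ∫⁻ y in D, ENNReal.ofReal (K' (x - y)) := by
    intro D hD
    exact lintegral_congr fun x => conv_ofReal hK0 hKint hKK' hD x
  have hSK : ∀ D : Set (EuclideanSpace ℝ (Fin d)), MeasurableSet D →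
      SK K D = ∫⁻ x in D, ∫⁻ y in D, ENNReal.ofReal (K' (x - y)) := by
    intro D hD
    exact lintegral_congr fun x => conv_ofReal hK0 hKint hKK' hD x
  set c : ℝ≥0∞ := ENNReal.ofReal (1 / 2) with hcdef
  have hc_ne_top : c ≠ ⊤ := ENNReal.ofReal_ne_top
  have hcc : c + c = 1 := by
    rw [← ENNReal.ofReal_add (by norm_num) (by norm_num)]; norm_num
  have h1c : 1 - c = c := ENNReal.sub_eq_of_eq_add hc_ne_top hcc.symm
  have hmem : ∀ x, x ∈ thresh K E₀ ↔ c < u x := by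
    intro x
    rw [← hconvE₀ x]
    exact (ENNReal.ofReal_lt_ofReal_iff_of_nonneg (by norm_num)).symm
  have hthresh_meas : MeasurableSet (thresh K E₀) := by
    have : thresh K E₀ = {x | c < u x} := Set.ext fun x => hmem x
    rw [this]
    exact measurableSet_lt measurable_const hu_m
  -- Key reduction
  have key : ∀ F : Set (EuclideanSpace ℝ (Fin d)), MeasurableSet F → F ⊆ Ω \ E₀ →
      ((PK K E₀ ≤ PK K (E₀ ∪ F) + SK K F) ↔
        (∫⁻ x in F, u x) ≤ ∫⁻ x in F, (1 - u x)) := by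
    intro F hF hFsub
    have hFE₀ : Disjoint E₀ F :=
      Set.disjoint_left.mpr fun x hx hx' => (hFsub hx').2 hx
    set G : Set (EuclideanSpace ℝ (Fin d)) := E₀ᶜ ∩ Fᶜ with hGdef
    have hGF_disj : Disjoint G F := Set.disjoint_left.mpr fun x hx hx' => hx.2 hx'
    have hEc : E₀ᶜ = G ∪ F := by
      ext x
      constructor
      · intro hx
        by_cases hxF : x ∈ F
        · exact Or.inr hxF
        · exact Or.inl ⟨hx, hxF⟩
      · rintro (hx | hx)
        · exact hx.1
        · exact (hFsub hx).2
    have hUc : (E₀ ∪ F)ᶜ = G := by rw [Set.compl_union]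
    have e1 : PK K (E₀ ∪ F)
        = (∫⁻ x in G, ∫⁻ y in E₀, ENNReal.ofReal (K' (x - y)))
          + ∫⁻ x in G, ∫⁻ y in F, ENNReal.ofReal (K' (x - y)) := by
      rw [hPK _ (hE₀.union hF), hUc]
      calc
        ∫⁻ x in G, ∫⁻ y in E₀ ∪ F, ENNReal.ofReal (K' (x - y))
            = ∫⁻ x in G, ((∫⁻ y in E₀, ENNReal.ofReal (K' (x - y)))
              + ∫⁻ y in F, ENNReal.ofReal (K' (x - y))) :=
            lintegral_congr fun x => lintegral_union hF hFE₀
        _ = _ := lintegral_add_left (measK_inner hK'm hE₀) _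
    have e2 : PK K E₀
        = (∫⁻ x in G, ∫⁻ y in E₀, ENNReal.ofReal (K' (x - y)))
          + ∫⁻ x in F, ∫⁻ y in E₀, ENNReal.ofReal (K' (x - y)) := by
      rw [hPK E₀ hE₀, hEc, lintegral_union hF hGF_disj]
    have e3 : SK K F = ∫⁻ x in F, ∫⁻ y in F, ENNReal.ofReal (K' (x - y)) := hSK F hF
    have hfin : (∫⁻ x in G, ∫⁻ y in E₀, ENNReal.ofReal (K' (x - y))) ≠ ⊤ := by
      have hle : (∫⁻ x in G, ∫⁻ y in E₀, ENNReal.ofReal (K' (x - y))) ≤ PK K E₀ := by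
        rw [e2]; exact le_self_add
      exact (hle.trans_lt hPE₀).ne
    have e4 : (∫⁻ x in G, ∫⁻ y in F, ENNReal.ofReal (K' (x - y)))
          + (∫⁻ x in F, ∫⁻ y in F, ENNReal.ofReal (K' (x - y)))
        = ∫⁻ x in F, ∫⁻ y in E₀ᶜ, ENNReal.ofReal (K' (x - y)) := by
      calc
        (∫⁻ x in G, ∫⁻ y in F, ENNReal.ofReal (K' (x - y)))
              + (∫⁻ x in F, ∫⁻ y in F, ENNReal.ofReal (K' (x - y)))
            = ∫⁻ x in E₀ᶜ, ∫⁻ y in F, ENNReal.ofReal (K' (x - y)) := by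
              rw [hEc, lintegral_union hF hGF_disj]
        _ = ∫⁻ x in F, ∫⁻ y in E₀ᶜ, ENNReal.ofReal (K' (x - y)) :=
              JJ_symm hK'm hK'e hE₀.compl hF
    have e5 : (∫⁻ x in F, ∫⁻ y in E₀ᶜ, ENNReal.ofReal (K' (x - y)))
        = ∫⁻ x in F, (1 - u x) := lintegral_congr fun x => huc x
    rw [e1, e2, e3, add_assoc, ENNReal.add_le_add_iff_left hfin, e4, e5]
  constructor
  · intro hnull F hF hFsub
    rw [key F hF hFsub]
    refine lintegral_mono_ae ?_
    have h1 : ∀ᵐ x ∂(volume.restrict F), x ∈ F := ae_restrict_mem hF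
    have h2 : ∀ᵐ x ∂(volume.restrict F), x ∉ thresh K E₀ \ E₀ :=
      ae_restrict_of_ae (measure_eq_zero_iff_ae_notMem.mp hnull)
    filter_upwards [h1, h2] with x hxF hxn
    have hxE₀ : x ∉ E₀ := (hFsub hxF).2
    have hxth : x ∉ thresh K E₀ := fun h => hxn ⟨h, hxE₀⟩
    have hux : u x ≤ c := not_lt.mp fun h => hxth ((hmem x).mpr h)
    calc u x ≤ c := hux
      _ = 1 - c := h1c.symm
      _ ≤ 1 - u x := tsub_le_tsub_left hux 1
  · intro hcond
    set F : Set (EuclideanSpace ℝ (Fin d)) := thresh K E₀ \ E₀ with hFdef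
    have hFm : MeasurableSet F := hthresh_meas.diff hE₀
    have hFsub : F ⊆ Ω \ E₀ := fun x hx => ⟨hbig (Or.inl hx.1), hx.2⟩
    have hineq := (key F hFm hFsub).mp (hcond F hFm hFsub)
    have hculto : ∀ x ∈ F, c < u x := fun x hx => (hmem x).mp hx.1
    have hub : (∫⁻ x in F, (1 - u x)) ≤ c * volume F := by
      rw [← setLIntegral_const F c]
      refine lintegral_mono_ae ((ae_restrict_mem hFm).mono fun x hx => ?_)
      calc 1 - u x ≤ 1 - c := tsub_le_tsub_left (hculto x hx).le 1
        _ = c := h1c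
    have hlb : c * volume F ≤ ∫⁻ x in F, u x := by
      rw [← setLIntegral_const F c]
      exact lintegral_mono_ae ((ae_restrict_mem hFm).mono fun x hx => (hculto x hx).le)
    have hfin2 : (∫⁻ x in F, u x) ≠ ⊤ := by
      have hle : (∫⁻ x in F, u x) ≤ PK K E₀ := by
        rw [hPK E₀ hE₀]
        exact lintegral_mono_set fun x hx => hx.2
      exact (hle.trans_lt hPE₀).ne
    have heq : (∫⁻ x in F, u x) = c * volume F := le_antisymm (hineq.trans hub) hlb
    have hvolfin : c * volume F ≠ ⊤ := heq ▸ hfin2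
    have hsub : (∫⁻ x in F, (u x - c)) = 0 := by
      rw [lintegral_sub measurable_const
        (by rw [setLIntegral_const]; exact hvolfin)
        ((ae_restrict_mem hFm).mono fun x hx => (hculto x hx).le)]
      rw [setLIntegral_const, heq, tsub_self]
    have hae0 : ∀ᵐ x ∂(volume.restrict F), u x - c = 0 := by
      have := (lintegral_eq_zero_iff (hu_m.sub measurable_const)).mp hsub
      filter_upwards [this] with x hx using hx
    have hfalse : ∀ᵐ _x ∂(volume.restrict F), False := by
      filter_upwards [ae_restrict_mem hFm, hae0] with x hxF h0
      exact absurd (tsub_eq_zero_iff_le.mp h0) (not_le.mpr (hculto x hxF))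
    have hres : volume.restrict F = 0 := by
      rw [← ae_eq_bot, ← Filter.eventually_false_iff_eq_bot]
      exact hfalse
    exact Measure.restrict_eq_zero.mp hres
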